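/- arXiv:1403.0238 — 2 statements merged into one kernel-verified Lean document; each statement's English description precedes it below -/
import Mathlib

section
/- Morse–Hedlund theorem: a biinfinite sequence x ∈ A^ℤ over a finite alphabet is periodic under the shift if and only if there exists n ≥ 1 such that the number of distinct length-n words occurring in x is at most n. -/
open Filter Topology

/-- The shift by `k`: `(shiftZ k x) i = x (i + k)`. `shiftZ 1` is the left shift `σ`. -/
def shiftZ {A : Type*} (k : ℤ) (x : ℤ → A) : ℤ → A := fun i => x (i + k)

/-- A subshift: a closed, shift-invariant subset of `A^ℤ`. -/
def IsSubshift {A : Type*} [TopologicalSpace A] (X : Set (ℤ → A)) : Prop :=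
  IsClosed X ∧ ∀ (k : ℤ), ∀ x ∈ X, shiftZ k x ∈ X

/-- `wordCount X n` = number of words of length `n` occurring (at the origin) in points of `X`. -/
noncomputable def wordCount {A : Type*} (X : Set (ℤ → A)) (n : ℕ) : ℕ :=
  Set.ncard { w : Fin n → A | ∃ x ∈ X, ∀ i : Fin n, x (i.val : ℤ) = w i }

/-- `ptWordCount x n` = number of words of length `n` occurring in the single point `x`. -/
noncomputable def ptWordCount {A : Type*} (x : ℤ → A) (n : ℕ) : ℕ :=
  Set.ncard { w : Fin n → A | ∃ a : ℤ, ∀ i : Fin n, x (a + (i.val : ℤ)) = w i }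

/-- `patternCount η n k` = number of `n × k` rectangular patterns occurring in `η : ℤ² → A`. -/
noncomputable def patternCount {A : Type*} (η : ℤ × ℤ → A) (n k : ℕ) : ℕ :=
  Set.ncard { β : Fin n × Fin k → A | ∃ a b : ℤ,
    ∀ p : Fin n × Fin k, η (a + (p.1.val : ℤ), b + (p.2.val : ℤ)) = β p }

/-- Subquadratic growth: `liminf P_X(n)/n² = 0`. -/
def Subquadratic {A : Type*} (X : Set (ℤ → A)) : Prop :=
  Filter.atTop.liminf (fun n : ℕ => (wordCount X n : ℝ) / (n : ℝ) ^ 2) = 0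

/-- Topological transitivity: some point of `X` has dense shift-orbit in `X`. -/
def TopTransitive {A : Type*} [TopologicalSpace A] (X : Set (ℤ → A)) : Prop :=
  ∃ x ∈ X, ∀ y ∈ X, y ∈ closure { z | ∃ k : ℤ, z = shiftZ k x }

/-- `φ` is a sliding block code of range `N`: `(φ x)(i)` is determined by `x(i-N)⋯x(i+N)`. -/
def HasRange {A : Type*} (X : Set (ℤ → A)) (φ : {x // x ∈ X} → {x // x ∈ X}) (N : ℕ) : Prop :=
  ∀ x y : {x // x ∈ X}, ∀ i : ℤ,
    (∀ j : ℤ, i - (N : ℤ) ≤ j → j ≤ i + (N : ℤ) → x.val j = y.val j) →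
      (φ x).val i = (φ y).val i

/-- `φ` commutes with the shift `σ` on `X` (stated extensionally on the subtype). -/
def CommutesWithShift {A : Type*} (X : Set (ℤ → A))
    (φ : {x // x ∈ X} → {x // x ∈ X}) : Prop :=
  ∀ x y : {x // x ∈ X}, y.val = shiftZ 1 x.val → (φ y).val = shiftZ 1 (φ x).val

/-- The `ℤ²`-configuration `η_{φ,x}(i,j) = (φ^j x)(i)`. -/
def eta {A : Type*} (X : Set (ℤ → A)) (φ : Equiv.Perm {x // x ∈ X})
    (x : {x // x ∈ X}) : ℤ × ℤ → A := fun p => ((φ ^ p.2) x).val p.1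

/-!
A period `p ≠ 0` makes the word of length `n` at position `a` depend only on `a mod p`, so there
are at most `|p|` words of each length. Conversely, since `P_x(0) = 1`, the bound `P_x(n) ≤ n`
forces `P_x(k + 1) ≤ P_x(k)` for some `k < n`. Then deleting the first or the last letter is
injective on words of length `k + 1`: each word of length `k` has a unique extension to either
side, so the word at `a` determines the words at `a ± 1`. Two positions `a ≠ b` carrying the same
word of length `k` (pigeonhole) then carry the same word forever in both directions, and `a - b`
is a period.
-/

section

open Set Function

variable {A : Type*}

def wordAt (x : ℤ → A) (n : ℕ) (a : ℤ) : Fin n → A := fun i => x (a + i)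

theorem ptWordCount_eq_ncard_range_wordAt (x : ℤ → A) (n : ℕ) :
    ptWordCount x n = (range (wordAt x n)).ncard := by
  simp only [ptWordCount, wordAt, range, funext_iff]

theorem init_wordAt (x : ℤ → A) (k : ℕ) (a : ℤ) :
    Fin.init (wordAt x (k + 1) a) = wordAt x k a :=
  rfl

theorem tail_wordAt (x : ℤ → A) (k : ℕ) (a : ℤ) :
    Fin.tail (wordAt x (k + 1) a) = wordAt x k (a + 1) := by
  funext i
  simp only [Fin.tail, wordAt, Fin.val_succ]
  congr 1
  push_cast
  ring

theorem Function.Periodic.wordAt {x : ℤ → A} {p : ℤ} (hx : Periodic x p) (n : ℕ) :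
    Periodic (wordAt x n) p := fun a => funext fun i => by
  simpa only [_root_.wordAt, add_right_comm] using hx (a + i)

theorem Function.Periodic.ncard_range_le {β : Type*} {f : ℤ → β} {c : ℤ} (hf : Periodic f c)
    (hc : 0 < c) : (range f).ncard ≤ c.toNat := by
  rw [← hf.image_Ioc hc 0, zero_add]
  calc (f '' Ioc 0 c).ncard ≤ (Ioc 0 c).ncard := ncard_image_le (finite_Ioc 0 c)
    _ = c.toNat := by rw [← Finset.coe_Ioc, ncard_coe_finset, Int.card_Ioc, sub_zero]

theorem ptWordCount_le_of_periodic {x : ℤ → A} {p : ℤ} (hx : Periodic x p) (hp : p ≠ 0)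
    (n : ℕ) : ptWordCount x n ≤ p.natAbs := by
  have habs : Periodic x (p.natAbs : ℤ) := by
    rw [Int.natCast_natAbs]
    rcases abs_choice p with h | h <;> rw [h]
    exacts [hx, hx.neg]
  rw [ptWordCount_eq_ncard_range_wordAt, ← Int.toNat_natCast p.natAbs]
  exact (habs.wordAt n).ncard_range_le (by omega)

theorem ptWordCount_zero (x : ℤ → A) : ptWordCount x 0 = 1 := by
  rw [ptWordCount_eq_ncard_range_wordAt, ncard_eq_one]
  exact ⟨wordAt x 0 0, eq_singleton_iff_unique_mem.2
    ⟨mem_range_self 0, fun _ _ => Subsingleton.elim _ _⟩⟩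

theorem Nat.exists_lt_succ_le_of_lt_add {f : ℕ → ℕ} {n : ℕ} (h : f n < f 0 + n) :
    ∃ k < n, f (k + 1) ≤ f k := by
  by_contra! hf
  have grow : ∀ m ≤ n, f 0 + m ≤ f m := by
    intro m
    induction m with
    | zero => simp
    | succ m ih => intro hm; have := hf m (by omega); have := ih (by omega); omega
  exact absurd (grow n le_rfl) (by omega)

theorem eq_of_comp_eq_of_ncard_range_le {ι β γ : Type*} {u : ι → β} {g : β → γ}
    {v : ι → γ} (hgu : g ∘ u = v) (hu : (range u).Finite)
    (h : (range u).ncard ≤ (range v).ncard) {a b : ι} (hab : v a = v b) : u a = u b := by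
  subst hgu
  rw [range_comp] at h
  have hinj : InjOn g (range u) := injOn_of_ncard_image_eq (le_antisymm (ncard_image_le hu) h) hu
  exact hinj (mem_range_self a) (mem_range_self b) hab

section Stall

variable [Finite A] {x : ℤ → A} {k : ℕ} (h : ptWordCount x (k + 1) ≤ ptWordCount x k)
include h

theorem wordAt_succ_eq_iff_wordAt_eq {a b : ℤ} :
    wordAt x (k + 1) a = wordAt x (k + 1) b ↔ wordAt x k a = wordAt x k b := by
  refine ⟨fun hab => ?_, fun hab => ?_⟩
  · rw [← init_wordAt, hab, init_wordAt]
  · rw [ptWordCount_eq_ncard_range_wordAt, ptWordCount_eq_ncard_range_wordAt] at h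
    exact eq_of_comp_eq_of_ncard_range_le (g := Fin.init) (funext (init_wordAt x k)) (toFinite _)
      h hab

theorem wordAt_succ_eq_iff_wordAt_add_one_eq {a b : ℤ} :
    wordAt x (k + 1) a = wordAt x (k + 1) b ↔ wordAt x k (a + 1) = wordAt x k (b + 1) := by
  refine ⟨fun hab => ?_, fun hab => ?_⟩
  · rw [← tail_wordAt, hab, tail_wordAt]
  · have hrange : range (wordAt x k ∘ (· + 1)) = range (wordAt x k) :=
      (Equiv.addRight (1 : ℤ)).surjective.range_comp _
    rw [ptWordCount_eq_ncard_range_wordAt, ptWordCount_eq_ncard_range_wordAt, ← hrange] at h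
    exact eq_of_comp_eq_of_ncard_range_le (g := Fin.tail) (funext (tail_wordAt x k)) (toFinite _)
      h hab

theorem exists_periodic_of_ptWordCount_succ_le : ∃ p ≠ 0, Periodic x p := by
  obtain ⟨a, b, hab, hword⟩ := Finite.exists_ne_map_eq_of_infinite (wordAt x k)
  have hshift : ∀ m : ℤ, wordAt x k (a + m) = wordAt x k (b + m) := by
    intro m
    induction m using Int.induction_on with
    | zero => simpa using hword
    | succ m ih =>
      rw [← add_assoc, ← add_assoc, ← wordAt_succ_eq_iff_wordAt_add_one_eq h,
        wordAt_succ_eq_iff_wordAt_eq h]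
      exact ih
    | pred m ih =>
      rw [← add_sub_assoc, ← add_sub_assoc, ← wordAt_succ_eq_iff_wordAt_eq h,
        wordAt_succ_eq_iff_wordAt_add_one_eq h, sub_add_cancel, sub_add_cancel]
      exact ih
  refine ⟨a - b, sub_ne_zero.2 hab, fun i => ?_⟩
  have := congrFun ((wordAt_succ_eq_iff_wordAt_eq h).2 (hshift (i - b))) 0
  convert this using 2 <;> simp only [wordAt, Fin.val_zero, Nat.cast_zero] <;> ring_nf

end Stall

end

/-- the Morse–Hedlund theorem. -/
theorem stmt3 {A : Type*} [Finite A] (x : ℤ → A) :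
    (∃ p : ℤ, p ≠ 0 ∧ shiftZ p x = x) ↔ ∃ n : ℕ, 1 ≤ n ∧ ptWordCount x n ≤ n := by
  constructor
  · rintro ⟨p, hp, hx⟩
    exact ⟨p.natAbs, Int.natAbs_pos.2 hp, ptWordCount_le_of_periodic (congrFun hx) hp _⟩
  · rintro ⟨n, -, hn⟩
    obtain ⟨k, -, hk⟩ := Nat.exists_lt_succ_le_of_lt_add (f := ptWordCount x) (n := n)
      (by rw [ptWordCount_zero]; omega)
    obtain ⟨p, hp, hx⟩ := exists_periodic_of_ptWordCount_succ_le hk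
    exact ⟨p, hp, funext hx⟩
end

section
/- If φ is an automorphism of a subshift X such that both φ and φ^{-1} are sliding block codes of range N, then for every x ∈ X and all n, k ≥ 1, the rectangular complexity of the ℤ²-configuration η_{φ,x} satisfies P_{η_{φ,x}}(n,k) ≤ P_X(2N(k-1) + n). -/
open Filter Topology

/-! Put `L = N(k-1)`. Since `φ` commutes with the shift, the row `j` of the `n × k` pattern of
`η_{φ,x}` at `(a,b)` is the word `(φ^j σ^L y)[0,n)` with `y = σ^{a-L} φ^b x ∈ X`. As `φ^j` has range
`jN ≤ L`, this row only depends on `y[0, 2L+n)`, so every pattern is the image of a word of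
length `2L+n` of `X`. -/

theorem Function.FactorsThrough.ncard_range_le {α β γ : Type*} {f : α → β} {g : α → γ}
    (h : g.FactorsThrough f) (hf : (Set.range f).Finite) :
    (Set.range g).ncard ≤ (Set.range f).ncard := by
  rcases isEmpty_or_nonempty α with hα | ⟨⟨a₀⟩⟩
  · simp [Set.range_eq_empty]
  · have hg : Set.range g = Function.extend f g (fun _ => g a₀) '' Set.range f := by
      rw [← Set.range_comp]
      exact congrArg Set.range (funext fun a => (h.extend_apply _ a).symm)
    exact hg ▸ Set.ncard_image_le hf

theorem shiftZ_zero {A : Type*} (x : ℤ → A) : shiftZ 0 x = x := by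
  funext i; simp [shiftZ]

theorem shiftZ_shiftZ {A : Type*} (a b : ℤ) (x : ℤ → A) :
    shiftZ a (shiftZ b x) = shiftZ (a + b) x := by
  funext i; simp [shiftZ, add_assoc]

theorem wordCount_eq_ncard_range {A : Type*} (X : Set (ℤ → A)) (m : ℕ) :
    wordCount X m = (Set.range fun (y : {x // x ∈ X}) (t : Fin m) => y.val t).ncard := by
  rw [wordCount]
  congr 1
  ext w
  exact ⟨fun ⟨z, hz, hw⟩ => ⟨⟨z, hz⟩, funext hw⟩, fun ⟨y, hy⟩ => ⟨y.val, y.2, congrFun hy⟩⟩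

namespace IsSubshift

variable {A : Type*} [TopologicalSpace A] {X : Set (ℤ → A)}

def shiftPerm (hX : IsSubshift X) : Equiv.Perm {x // x ∈ X} where
  toFun y := ⟨shiftZ 1 y.val, hX.2 1 y.val y.2⟩
  invFun y := ⟨shiftZ (-1) y.val, hX.2 (-1) y.val y.2⟩
  left_inv y := Subtype.ext (by simp [shiftZ_shiftZ, shiftZ_zero])
  right_inv y := Subtype.ext (by simp [shiftZ_shiftZ, shiftZ_zero])

theorem shiftPerm_zpow_apply (hX : IsSubshift X) (a : ℤ) (y : {x // x ∈ X}) :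
    ((hX.shiftPerm ^ a) y).val = shiftZ a y.val := by
  induction a using Int.induction_on generalizing y with
  | zero => simp [shiftZ_zero]
  | succ a ih =>
    rw [add_comm, zpow_one_add, Equiv.Perm.mul_apply]
    exact (congrArg (shiftZ 1) (ih y)).trans (shiftZ_shiftZ _ _ _)
  | pred a ih =>
    rw [zpow_sub_one, Equiv.Perm.mul_apply, ih, sub_eq_add_neg, ← shiftZ_shiftZ]
    rfl

theorem commute_shiftPerm (hX : IsSubshift X) {φ : Equiv.Perm {x // x ∈ X}}
    (hcomm : CommutesWithShift X φ) : Commute φ hX.shiftPerm :=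
  Equiv.ext fun y => Subtype.ext (hcomm y (hX.shiftPerm y) rfl)

end IsSubshift

namespace HasRange

variable {A : Type*} {X : Set (ℤ → A)} {f g : {x // x ∈ X} → {x // x ∈ X}} {M M' : ℕ}

theorem mono (hf : HasRange X f M) (h : M ≤ M') : HasRange X f M' :=
  fun x y i hxy => hf x y i fun j hj₁ hj₂ => hxy j (by omega) (by omega)

theorem comp (hg : HasRange X g M') (hf : HasRange X f M) : HasRange X (g ∘ f) (M + M') :=
  fun x y i hxy => hg _ _ i fun j hj₁ hj₂ => hf x y j fun l hl₁ hl₂ => hxy l (by omega) (by omega)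

theorem pow {φ : Equiv.Perm {x // x ∈ X}} {N : ℕ} (hφ : HasRange X φ N) (j : ℕ) :
    HasRange X ⇑(φ ^ j) (j * N) := by
  induction j with
  | zero => exact fun x y i hxy => by simpa using hxy i (by simp) (by simp)
  | succ j ih => rw [pow_succ', Equiv.Perm.coe_mul, add_one_mul]; exact hφ.comp ih

end HasRange

section

variable {A : Type*} [TopologicalSpace A] {X : Set (ℤ → A)}

theorem HasRange.apply_shiftPerm_eq (hX : IsSubshift X) {f : {x // x ∈ X} → {x // x ∈ X}}
    {L n : ℕ} (hf : HasRange X f L) {y y' : {x // x ∈ X}}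
    (h : ∀ t : ℤ, 0 ≤ t → t < 2 * L + n → y.val t = y'.val t) {i : ℤ} (hi₀ : 0 ≤ i)
    (hi : i < n) :
    (f ((hX.shiftPerm ^ (L : ℤ)) y)).val i = (f ((hX.shiftPerm ^ (L : ℤ)) y')).val i :=
  hf _ _ i fun s hs₁ hs₂ => by
    rw [hX.shiftPerm_zpow_apply, hX.shiftPerm_zpow_apply]
    exact h _ (by omega) (by omega)

theorem eta_add_add (hX : IsSubshift X) {φ : Equiv.Perm {x // x ∈ X}}
    (hcomm : CommutesWithShift X φ) (x : {x // x ∈ X}) (a b i : ℤ) (j : ℕ) :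
    eta X φ x (a + i, b + j) = ((φ ^ j) ((hX.shiftPerm ^ a) ((φ ^ b) x))).val i := by
  have hc : Commute (φ ^ j) (hX.shiftPerm ^ a) :=
    ((hX.commute_shiftPerm hcomm).pow_left j).zpow_right a
  rw [← Equiv.Perm.mul_apply, hc.eq, Equiv.Perm.mul_apply, hX.shiftPerm_zpow_apply,
    ← Equiv.Perm.mul_apply, ← zpow_natCast, ← zpow_add, add_comm (j : ℤ), add_comm a]
  rfl

end

theorem stmt5_general {A : Type*} [Finite A] [TopologicalSpace A]
    (X : Set (ℤ → A)) (hX : IsSubshift X)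
    (φ : Equiv.Perm {x // x ∈ X}) (hcomm : CommutesWithShift X φ) (N : ℕ)
    (hr : HasRange X φ N)
    (x : {x // x ∈ X}) (n k : ℕ) :
    patternCount (eta X φ x) n k ≤ wordCount X (2 * N * (k - 1) + n) := by
  set L := N * (k - 1)
  have hm : 2 * N * (k - 1) = 2 * L := by ring
  let pattern (y : {x // x ∈ X}) (p : Fin n × Fin k) : A :=
    ((φ ^ (p.2 : ℕ)) ((hX.shiftPerm ^ (L : ℤ)) y)).val p.1
  let word (y : {x // x ∈ X}) (t : Fin (2 * N * (k - 1) + n)) : A := y.val t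
  have h_patterns : {β | ∃ a b : ℤ, ∀ p : Fin n × Fin k,
      eta X φ x (a + (p.1.val : ℤ), b + (p.2.val : ℤ)) = β p} ⊆ Set.range pattern := by
    rintro β ⟨a, b, hβ⟩
    refine ⟨(hX.shiftPerm ^ (a - L)) ((φ ^ b) x), funext fun p => ?_⟩
    have hsplit : hX.shiftPerm ^ a = hX.shiftPerm ^ (L : ℤ) * hX.shiftPerm ^ (a - L) := by
      rw [← zpow_add, add_sub_cancel]
    rw [← hβ p, eta_add_add hX hcomm, hsplit]
    rfl
  have h_factors : pattern.FactorsThrough word := by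
    intro y y' hw
    funext p
    have hj : p.2 * N ≤ L := by
      rw [mul_comm]; exact Nat.mul_le_mul_left N (by omega)
    refine ((hr.pow p.2).mono hj).apply_shiftPerm_eq hX (n := n) (fun t ht₀ ht => ?_)
      (by positivity) (by simp)
    lift t to ℕ using ht₀
    exact congrFun hw ⟨t, by omega⟩
  calc patternCount (eta X φ x) n k ≤ (Set.range pattern).ncard := Set.ncard_le_ncard h_patterns
    _ ≤ (Set.range word).ncard := h_factors.ncard_range_le (Set.toFinite _)
    _ = wordCount X (2 * N * (k - 1) + n) := (wordCount_eq_ncard_range X _).symm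

/-- rectangular complexity bound `P_{η_{φ,x}}(n,k) ≤ P_X(2N(k-1)+n)`. -/
theorem stmt5 {A : Type*} [Finite A] [TopologicalSpace A] [DiscreteTopology A]
    (X : Set (ℤ → A)) (hX : IsSubshift X)
    (φ : Equiv.Perm {x // x ∈ X}) (hcomm : CommutesWithShift X φ) (N : ℕ)
    (hr : HasRange X φ N) (hr' : HasRange X φ.symm N)
    (x : {x // x ∈ X}) (n k : ℕ) (hn : 1 ≤ n) (hk : 1 ≤ k) :
    patternCount (eta X φ x) n k ≤ wordCount X (2 * N * (k - 1) + n) :=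
  stmt5_general X hX φ hcomm N hr x n k
end
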